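/- Let ψ₁, ψ₂ ∈ ℂ′ with δ := Re(ψ₂ψ̄₂ − ψ₁ψ̄₁) > 0, and define the 2×2 matrix over ℂ′: F := δ^{−1/2}·[[ψ̄₂, ψ̄₁], [ψ₁, ψ₂]]. Then F belongs to SU′₁,₁ (in particular det F = 1), and (i′/2)·F·σ₃·F⁻¹ = ½·[[r·i′, −p − q·i′], [−p + q·i′, −r·i′]], where p = −2·Im(ψ₁ψ₂)/δ, q = 2·Re(ψ₁ψ₂)/δ, and r = Re(ψ₂ψ̄₂ + ψ₁ψ̄₁)/δ. -/

import Mathlib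

noncomputable section

/-- Para-complex numbers modeled as the product ring ℝ × ℝ. -/
abbrev Cp : Type := ℝ × ℝ

/-- The para-complex unit i′ = (1, -1), satisfying i′² = 1. -/
def ip : Cp := (1, -1)

/-- Para-complex conjugation. -/
def pconj (z : Cp) : Cp := (z.2, z.1)

/-- Real part of a para-complex number. -/
def pRe (z : Cp) : ℝ := (z.1 + z.2) / 2

/-- Imaginary part of a para-complex number. -/
def pIm (z : Cp) : ℝ := (z.1 - z.2) / 2

/-- Embedding of ℝ into the para-complex numbers. -/
def oR (r : ℝ) : Cp := (r, r)

/-- The exponential of the Banach algebra ℝ × ℝ (componentwise real exponential). -/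
def pexp (z : Cp) : Cp := (Real.exp z.1, Real.exp z.2)

/-- The para-complex derivative ∂_z f = ½(∂ₓf + i′ ∂_y f). -/
def dz (f : Cp → Cp) (p : Cp) : Cp :=
  oR (1/2) * (fderiv ℝ f p (1, 0) + ip * fderiv ℝ f p (0, 1))

/-- The para-complex derivative ∂_z̄ f = ½(∂ₓf − i′ ∂_y f). -/
def dzbar (f : Cp → Cp) (p : Cp) : Cp :=
  oR (1/2) * (fderiv ℝ f p (1, 0) - ip * fderiv ℝ f p (0, 1))

/-!
Write `F = s • G` with `s = δ^(-1/2)` and `G = !![ψ̄₂, ψ̄₁; ψ₁, ψ₂]`. Since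
`det G = ψ₂ψ̄₂ − ψ₁ψ̄₁` is fixed by conjugation it is real, namely `δ`; so `det F = s²δ = 1`
and `F⁻¹ = adj F`. Then
`F σ₃ F⁻¹ = s² • G σ₃ adj G`, and any `2 × 2` matrix satisfies
`!![a, b; c, d] σ₃ adj = !![ad + bc, −2ab; 2cd, −(ad + bc)]`; splitting `ψ₁ψ₂` into its real
and imaginary parts gives `p` and `q`.
-/

open Matrix

theorem pconj_mul (z w : Cp) : pconj (z * w) = pconj z * pconj w := rfl

theorem pconj_pconj (z : Cp) : pconj (pconj z) = z := rfl

theorem pconj_sub (z w : Cp) : pconj (z - w) = pconj z - pconj w := rfl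

theorem pconj_oR (r : ℝ) : pconj (oR r) = oR r := rfl

theorem oR_mul (r s : ℝ) : oR (r * s) = oR r * oR s := rfl

theorem oR_one : oR 1 = 1 := rfl

theorem oR_pRe_of_pconj_eq {z : Cp} (h : pconj z = z) : oR (pRe z) = z := by
  obtain ⟨x, y⟩ := z
  obtain rfl : y = x := congrArg Prod.fst h
  simp [oR, pRe]

theorem pconj_mul_pconj_self (z : Cp) : pconj (z * pconj z) = z * pconj z := by
  rw [pconj_mul, pconj_pconj, mul_comm]

theorem Matrix.inv_eq_adjugate_of_det_eq_one {n R : Type*} [Fintype n] [DecidableEq n]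
    [CommRing R] {A : Matrix n n R} (h : A.det = 1) : A⁻¹ = A.adjugate := by
  rw [inv_def, h, Ring.inverse_one, one_smul]

theorem Matrix.mul_diag_one_neg_one_mul_adjugate_fin_two {R : Type*} [CommRing R] (a b c d : R) :
    !![a, b; c, d] * !![1, 0; 0, -1] * (!![a, b; c, d]).adjugate =
      !![a * d + b * c, -(2 * a * b); 2 * c * d, -(a * d + b * c)] := by
  rw [adjugate_fin_two_of, mul_fin_two, mul_fin_two]
  congr 1
  ring_nf

/-- The frame of the normal Gauss map lies in SU′₁,₁ and conjugating σ₃ yields the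
represented normal Gauss map. -/
theorem frame_in_SU11' (ψ₁ ψ₂ : Cp) (δ : ℝ)
    (hδdef : δ = pRe (ψ₂ * pconj ψ₂ - ψ₁ * pconj ψ₁)) (hδ : 0 < δ)
    (F : Matrix (Fin 2) (Fin 2) Cp)
    (hF : F = oR ((Real.sqrt δ)⁻¹) • !![pconj ψ₂, pconj ψ₁; ψ₁, ψ₂])
    (p q r : ℝ)
    (hp : p = -2 * pIm (ψ₁ * ψ₂) / δ)
    (hq : q = 2 * pRe (ψ₁ * ψ₂) / δ)
    (hr : r = pRe (ψ₂ * pconj ψ₂ + ψ₁ * pconj ψ₁) / δ) :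
    (∃ α β : Cp, F = !![α, β; pconj β, pconj α] ∧ α * pconj α - β * pconj β = 1) ∧
    F.det = 1 ∧
    (ip / 2) • (F * !![(1 : Cp), 0; 0, -1] * F⁻¹) =
      oR (1/2) • !![oR r * ip, -(oR p) - oR q * ip; -(oR p) + oR q * ip, -(oR r * ip)] := by
  set s : Cp := oR (Real.sqrt δ)⁻¹
  have hss : s * s = oR δ⁻¹ := by
    rw [← oR_mul, ← mul_inv, Real.mul_self_sqrt hδ.le]
  have hnorm : ψ₂ * pconj ψ₂ - ψ₁ * pconj ψ₁ = oR δ := by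
    rw [hδdef, oR_pRe_of_pconj_eq]
    rw [pconj_sub, pconj_mul_pconj_self, pconj_mul_pconj_self]
  have hF_entries :
      F = !![s * pconj ψ₂, s * pconj ψ₁; pconj (s * pconj ψ₁), pconj (s * pconj ψ₂)] := by
    rw [hF, pconj_mul, pconj_mul, pconj_oR, pconj_pconj, pconj_pconj]
    exact eta_fin_two _
  have hdet : F.det = 1 := by
    rw [hF, det_smul, det_fin_two_of, Fintype.card_fin, sq, hss, mul_comm (pconj ψ₂),
      mul_comm (pconj ψ₁), hnorm, ← oR_mul, inv_mul_cancel₀ hδ.ne', oR_one]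
  refine ⟨⟨_, _, hF_entries, by rw [← det_fin_two_of, ← hF_entries, hdet]⟩, hdet, ?_⟩
  rw [inv_eq_adjugate_of_det_eq_one hdet, hF, adjugate_smul, Fintype.card_fin, pow_one,
    smul_mul_assoc, smul_mul_smul_comm, hss, mul_diag_one_neg_one_mul_adjugate_fin_two]
  subst hp hq hr
  ext i j <;> fin_cases i <;> fin_cases j <;> simp [oR, ip, pconj, pRe, pIm] <;> ring
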